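/- arXiv:1309.1037 — 3 statements merged into one kernel-verified Lean document; each statement's English description precedes it below -/
import Mathlib

section
/- Let λ_1 ∈ ℝ, a ∈ ℝ, c ∈ ℝ, μ_1 ∈ ℂ with λ_1 + a + μ_1 ≠ 0, and set B = (μ_1 - conj(μ_1))/(λ_1 + a + μ_1). Then the minimum over Y ∈ ℝ of |c(1 - B/2 + (B/2) tanh Y)|² equals c²(Re(λ_1 + a + μ_1))²/|λ_1 + a + μ_1|², so the depth of the cavity of the dark soliton, c² - min |q|², equals c² Im(μ_1)² / ((λ_1 + a + Re μ_1)² + Im(μ_1)²). -/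
open Complex ComplexConjugate

/-! Write `d = λ₁ + a + μ₁`. Since `λ₁ + a` is real, `μ₁ - conj μ₁ = d - conj d`, so
`1 - B/2 + (B/2) t = (Re d + i Im d · t) / d` and the intensity is
`c² (Re² d + Im² d · tanh² Y) / |d|²`, least where `tanh Y = 0`; then `|d|² - Re² d = Im² d`
gives the depth of the cavity. -/

lemma sub_conj_ofReal_add (r : ℝ) (μ : ℂ) :
    μ - conj μ = (r + μ) - conj (r + μ) := by
  simp

lemma one_sub_half_add_half_mul_eq {d : ℂ} (hd : d ≠ 0) (t : ℝ) :
    1 - (d - conj d) / d / 2 + (d - conj d) / d / 2 * t = (d.re + d.im * t * I) / d := by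
  rw [eq_div_iff hd, sub_conj]
  field_simp
  nth_rewrite 1 [← re_add_im d]
  push_cast
  ring

lemma sq_norm_mul_one_sub_half_add_half_mul (c : ℝ) {d : ℂ} (hd : d ≠ 0) (t : ℝ) :
    ‖(c : ℂ) * (1 - (d - conj d) / d / 2 + (d - conj d) / d / 2 * t)‖ ^ 2
      = c ^ 2 * (d.re ^ 2 + d.im ^ 2 * t ^ 2) / ‖d‖ ^ 2 := by
  rw [one_sub_half_add_half_mul_eq hd, norm_mul, norm_div, mul_pow, div_pow, Complex.sq_norm (_ + _),
    ← ofReal_mul, normSq_add_mul_I, norm_real, Real.norm_eq_abs, sq_abs]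
  ring

lemma isLeast_range_add_mul_sq_tanh (p : ℝ) {q : ℝ} (hq : 0 ≤ q) :
    IsLeast (Set.range fun Y : ℝ => p + q * Real.tanh Y ^ 2) p := by
  refine ⟨⟨0, by simp⟩, ?_⟩
  rintro _ ⟨Y, rfl⟩
  have : 0 ≤ q * Real.tanh Y ^ 2 := by positivity
  linarith

lemma sq_sub_mul_re_sq_div_sq_norm (c : ℝ) {d : ℂ} (hd : d ≠ 0) :
    c ^ 2 - c ^ 2 * d.re ^ 2 / ‖d‖ ^ 2 = c ^ 2 * d.im ^ 2 / (d.re ^ 2 + d.im ^ 2) := by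
  have hnorm : ‖d‖ ^ 2 = d.re ^ 2 + d.im ^ 2 := by rw [Complex.sq_norm, normSq_apply]; ring
  have hpos : 0 < d.re ^ 2 + d.im ^ 2 := by rw [← hnorm]; positivity
  rw [hnorm]
  field_simp
  ring

/-- The minimum of the dark-soliton intensity and the depth of the cavity. -/
theorem stmt_6 (l1 a c : ℝ) (μ1 : ℂ) (hden : (l1 : ℂ) + a + μ1 ≠ 0)
    (B : ℂ) (hB : B = (μ1 - (starRingEnd ℂ) μ1) / ((l1 : ℂ) + a + μ1)) :
    IsLeast
      (Set.range fun Y : ℝ =>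
        (norm ((c : ℂ) * (1 - B / 2 + (B / 2) * (Real.tanh Y : ℂ)))) ^ 2)
      (c ^ 2 * (((l1 : ℂ) + a + μ1).re) ^ 2 / (norm ((l1 : ℂ) + a + μ1)) ^ 2) ∧
    c ^ 2 - c ^ 2 * (((l1 : ℂ) + a + μ1).re) ^ 2 / (norm ((l1 : ℂ) + a + μ1)) ^ 2 =
      c ^ 2 * μ1.im ^ 2 / ((l1 + a + μ1.re) ^ 2 + μ1.im ^ 2) := by
  set d : ℂ := (l1 : ℂ) + a + μ1 with hd
  have hBd : B = (d - conj d) / d := by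
    rw [hB, sub_conj_ofReal_add (l1 + a)]
    push_cast
    rfl
  have hprofile : ∀ Y : ℝ, ‖(c : ℂ) * (1 - B / 2 + B / 2 * (Real.tanh Y : ℂ))‖ ^ 2
      = c ^ 2 * d.re ^ 2 / ‖d‖ ^ 2 + c ^ 2 * d.im ^ 2 / ‖d‖ ^ 2 * Real.tanh Y ^ 2 := fun Y => by
    rw [hBd, sq_norm_mul_one_sub_half_add_half_mul c hden]
    ring
  refine ⟨?_, ?_⟩
  · simp_rw [hprofile]
    exact isLeast_range_add_mul_sq_tanh _ (by positivity)
  · rw [sq_sub_mul_re_sq_div_sq_norm c hden]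
    simp [hd]
end

section
/- Let Φ_1 : ℝ² → ℂ^{n+1} satisfy Φ_{1,x} = (iλ_1 σ_3 + iQ)Φ_1 for a real parameter λ_1, and let Φ : ℝ² → ℂ^{n+1} satisfy Φ_x = (iλ σ_3 + iQ)Φ for λ ∈ ℂ, where σ_3 = diag(1, -I_n), Q is a smooth matrix function with Q†Λ = ΛQ, and Λ = diag(1, Λ_1,...,Λ_n), Λ_i ∈ {1,-1}. If λ ≠ conj(λ_1), then ∂_x [ Φ_1†ΛΦ / (i(λ - conj(λ_1))) ] = Φ_1† Λ σ_3 Φ. -/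
open Matrix Complex

set_option maxRecDepth 8000 in
set_option maxHeartbeats 1000000 in
/-- Lemma 1 (spatial part): the Λ-pairing of two eigenfunctions of the spatial Lax
operator admits the explicit antiderivative `Φ₁†ΛΦ / (i(λ - conj λ₁))`. -/
theorem stmt_8 (n : ℕ) (Q : ℝ → Matrix (Fin (n + 1)) (Fin (n + 1)) ℂ)
    (hQsmooth : ∀ i j, ContDiff ℝ (⊤ : ℕ∞) fun x => Q x i j)
    (σ3 : Matrix (Fin (n + 1)) (Fin (n + 1)) ℂ)
    (hσ3 : σ3 = Matrix.diagonal fun i => if i = 0 then 1 else -1)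
    (d : Fin (n + 1) → ℝ) (hd0 : d 0 = 1) (hd : ∀ i, d i = 1 ∨ d i = -1)
    (Λ : Matrix (Fin (n + 1)) (Fin (n + 1)) ℂ)
    (hΛ : Λ = Matrix.diagonal fun i => (d i : ℂ))
    (hsym : ∀ x, (Q x)ᴴ * Λ = Λ * Q x)
    (lam1 : ℝ) (lam : ℂ) (hlam : lam ≠ (lam1 : ℂ))
    (Φ1 Φ : ℝ → Fin (n + 1) → ℂ)
    (hΦ1 : ∀ x, HasDerivAt Φ1
      ((Complex.I • ((lam1 : ℂ) • σ3 + Q x)).mulVec (Φ1 x)) x)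
    (hΦ : ∀ x, HasDerivAt Φ
      ((Complex.I • (lam • σ3 + Q x)).mulVec (Φ x)) x) :
    ∀ x, HasDerivAt
      (fun x => ((fun i => (starRingEnd ℂ) (Φ1 x i)) ⬝ᵥ Λ.mulVec (Φ x)) /
        (Complex.I * (lam - (lam1 : ℂ))))
      ((fun i => (starRingEnd ℂ) (Φ1 x i)) ⬝ᵥ (Λ * σ3).mulVec (Φ x)) x := by
  intro x
  have hcne : Complex.I * (lam - (lam1 : ℂ)) ≠ 0 :=
    mul_ne_zero Complex.I_ne_zero (sub_ne_zero.mpr hlam)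
  -- entrywise symmetry
  have hs : ∀ i j, (starRingEnd ℂ) (Q x j i) * (d j : ℂ) = (d i : ℂ) * Q x i j := by
    intro i j
    have h : ((Q x)ᴴ * Λ) i j = (Λ * Q x) i j := by rw [hsym x]
    rw [hΛ, Matrix.mul_diagonal, Matrix.diagonal_mul, Matrix.conjTranspose_apply] at h
    simpa only [starRingEnd_apply] using h
  -- key matrix identity
  have hkey : (Complex.I • ((lam1 : ℂ) • σ3 + Q x))ᴴ * Λ
        + Λ * (Complex.I • (lam • σ3 + Q x))
      = (Complex.I * (lam - (lam1 : ℂ))) • (Λ * σ3) := by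
    rw [hσ3, hΛ, Matrix.diagonal_mul_diagonal]
    ext i j
    simp only [Matrix.add_apply, Matrix.mul_diagonal, Matrix.diagonal_mul,
      Matrix.conjTranspose_apply, Matrix.smul_apply, smul_eq_mul]
    by_cases hij : i = j
    · subst hij
      simp only [Matrix.diagonal_apply_eq]
      have hqs := hs i i
      have hss : (starRingEnd ℂ) (if i = 0 then (1 : ℂ) else -1)
          = (if i = 0 then (1 : ℂ) else -1) := by
        split_ifs <;> simp
      simp only [← starRingEnd_apply, _root_.map_add, _root_.map_mul,
        Complex.conj_I, Complex.conj_ofReal, hss]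
      linear_combination (-Complex.I) * hqs
    · simp only [Matrix.diagonal_apply_ne _ hij, Matrix.diagonal_apply_ne _ (Ne.symm hij)]
      have hqs := hs i j
      simp only [← starRingEnd_apply, _root_.map_add, _root_.map_mul, map_zero,
        Complex.conj_I, Complex.conj_ofReal, mul_zero, zero_add]
      linear_combination (-Complex.I) * hqs
  -- componentwise derivatives
  have hu : ∀ i, HasDerivAt (fun x => (starRingEnd ℂ) (Φ1 x i))
      ((starRingEnd ℂ) (((Complex.I • ((lam1 : ℂ) • σ3 + Q x)).mulVec (Φ1 x)) i)) x := by
    intro i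
    have := (hasDerivAt_pi.1 (hΦ1 x) i).star
    simpa only [starRingEnd_apply] using this
  have hv : ∀ j, HasDerivAt (fun x => Φ x j)
      (((Complex.I • (lam • σ3 + Q x)).mulVec (Φ x)) j) x := hasDerivAt_pi.1 (hΦ x)
  have hsum : HasDerivAt
      (fun x => ∑ i, ∑ j, (starRingEnd ℂ) (Φ1 x i) * (Λ i j * Φ x j))
      (∑ i, ∑ j, ((starRingEnd ℂ) (((Complex.I • ((lam1 : ℂ) • σ3 + Q x)).mulVec (Φ1 x)) i)
          * (Λ i j * Φ x j)
        + (starRingEnd ℂ) (Φ1 x i)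
          * (Λ i j * ((Complex.I • (lam • σ3 + Q x)).mulVec (Φ x)) j))) x :=
    HasDerivAt.fun_sum fun i _ => HasDerivAt.fun_sum fun j _ =>
      (hu i).mul ((hv j).const_mul (Λ i j))
  -- rewrite the function
  have hfun : ∀ y : ℝ, ((fun i => (starRingEnd ℂ) (Φ1 y i)) ⬝ᵥ Λ.mulVec (Φ y))
      = ∑ i, ∑ j, (starRingEnd ℂ) (Φ1 y i) * (Λ i j * Φ y j) := by
    intro y
    rw [show ((fun i => (starRingEnd ℂ) (Φ1 y i)) ⬝ᵥ Λ.mulVec (Φ y))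
        = ∑ i, (starRingEnd ℂ) (Φ1 y i) * ∑ j, Λ i j * Φ y j from rfl]
    exact Finset.sum_congr rfl fun i _ => Finset.mul_sum _ _ _
  -- identify the derivative value
  have hu' : (fun i => (starRingEnd ℂ) (Φ1 x i)) = star (Φ1 x) := by
    funext i; rfl
  have hval : (∑ i, ∑ j, ((starRingEnd ℂ) (((Complex.I • ((lam1 : ℂ) • σ3 + Q x)).mulVec (Φ1 x)) i)
          * (Λ i j * Φ x j)
        + (starRingEnd ℂ) (Φ1 x i)
          * (Λ i j * ((Complex.I • (lam • σ3 + Q x)).mulVec (Φ x)) j)))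
      = (Complex.I * (lam - (lam1 : ℂ)))
        * ((fun i => (starRingEnd ℂ) (Φ1 x i)) ⬝ᵥ (Λ * σ3).mulVec (Φ x)) := by
    have hsplit : (∑ i, ∑ j, ((starRingEnd ℂ) (((Complex.I • ((lam1 : ℂ) • σ3 + Q x)).mulVec (Φ1 x)) i)
          * (Λ i j * Φ x j)
        + (starRingEnd ℂ) (Φ1 x i)
          * (Λ i j * ((Complex.I • (lam • σ3 + Q x)).mulVec (Φ x)) j)))
        = (star ((Complex.I • ((lam1 : ℂ) • σ3 + Q x)).mulVec (Φ1 x))) ⬝ᵥ Λ.mulVec (Φ x)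
          + (star (Φ1 x)) ⬝ᵥ Λ.mulVec ((Complex.I • (lam • σ3 + Q x)).mulVec (Φ x)) := by
      simp only [dotProduct, Matrix.mulVec, Finset.mul_sum, Finset.sum_add_distrib,
        starRingEnd_apply, Pi.star_apply]
    rw [hsplit, hu', Matrix.star_mulVec, Matrix.mulVec_mulVec,
      Matrix.dotProduct_mulVec (star (Φ1 x) ᵥ* (Complex.I • ((lam1 : ℂ) • σ3 + Q x))ᴴ),
      Matrix.vecMul_vecMul, ← Matrix.dotProduct_mulVec,
      ← dotProduct_add, ← Matrix.add_mulVec, hkey,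
      Matrix.smul_mulVec, dotProduct_smul, smul_eq_mul]
  have h2 := hsum.div_const (Complex.I * (lam - (lam1 : ℂ)))
  rw [hval, mul_div_cancel_left₀ _ hcne] at h2
  have hfe : (fun y => ((fun i => (starRingEnd ℂ) (Φ1 y i)) ⬝ᵥ Λ.mulVec (Φ y))
        / (Complex.I * (lam - (lam1 : ℂ))))
      = fun y => (∑ i, ∑ j, (starRingEnd ℂ) (Φ1 y i) * (Λ i j * Φ y j))
        / (Complex.I * (lam - (lam1 : ℂ))) := by
    funext y; rw [hfun y]
  rw [hfe]
  exact h2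
end

section
/- In the defocusing case (all σ_l = 1) with distinct a_1,...,a_N ∈ ℝ and nonzero c_l, if (λ_1, y_1) and (λ_2, y_2) with y_1, y_2 > 0 both satisfy Σ_l c_l²/(a_l² + y²) = 1 and 2λ = Σ_l c_l² a_l/(a_l² + y²) (the stationary-soliton conditions), then y_1 = y_2 and λ_1 = λ_2. Hence the defocusing N-component NLS admits at most one stationary dark soliton family on a fixed background, and no stationary dark–dark bound states exist. -/
open Finset

theorem strictAntiOn_sum_sq_div_add_sq {ι : Type*} [Fintype ι] [Nonempty ι] (a c : ι → ℝ)
    (hc : ∀ l, c l ≠ 0) :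
    StrictAntiOn (fun y : ℝ => ∑ l, c l ^ 2 / (a l ^ 2 + y ^ 2)) (Set.Ioi 0) := by
  intro y₁ (hy₁ : 0 < y₁) y₂ _ hlt
  refine sum_lt_sum_of_nonempty univ_nonempty fun l _ => ?_
  exact div_lt_div_of_pos_left (sq_pos_of_ne_zero (hc l)) (by positivity) (by gcongr)

theorem stmt_16_general (N : ℕ) (hN : 0 < N) (a c : Fin N → ℝ)
    (hc : ∀ l, c l ≠ 0)
    (lam₁ lam₂ y₁ y₂ : ℝ) (hy₁ : 0 < y₁) (hy₂ : 0 < y₂)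
    (h₁ : (∑ l, (c l) ^ 2 / ((a l) ^ 2 + y₁ ^ 2)) = 1)
    (h₁' : 2 * lam₁ = ∑ l, (c l) ^ 2 * a l / ((a l) ^ 2 + y₁ ^ 2))
    (h₂ : (∑ l, (c l) ^ 2 / ((a l) ^ 2 + y₂ ^ 2)) = 1)
    (h₂' : 2 * lam₂ = ∑ l, (c l) ^ 2 * a l / ((a l) ^ 2 + y₂ ^ 2)) :
    y₁ = y₂ ∧ lam₁ = lam₂ := by
  have : Nonempty (Fin N) := Fin.pos_iff_nonempty.mp hN
  have hy : y₁ = y₂ :=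
    (strictAntiOn_sum_sq_div_add_sq a c hc).injOn hy₁ hy₂ (h₁.trans h₂.symm)
  subst hy
  exact ⟨rfl, by linarith⟩

/-- Uniqueness of the stationary dark soliton in the defocusing case: the
stationary-soliton conditions determine `(λ, y)` uniquely. -/
theorem stmt_16 (N : ℕ) (hN : 0 < N) (a c : Fin N → ℝ)
    (ha : Function.Injective a) (hc : ∀ l, c l ≠ 0)
    (lam₁ lam₂ y₁ y₂ : ℝ) (hy₁ : 0 < y₁) (hy₂ : 0 < y₂)
    (h₁ : (∑ l, (c l) ^ 2 / ((a l) ^ 2 + y₁ ^ 2)) = 1)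
    (h₁' : 2 * lam₁ = ∑ l, (c l) ^ 2 * a l / ((a l) ^ 2 + y₁ ^ 2))
    (h₂ : (∑ l, (c l) ^ 2 / ((a l) ^ 2 + y₂ ^ 2)) = 1)
    (h₂' : 2 * lam₂ = ∑ l, (c l) ^ 2 * a l / ((a l) ^ 2 + y₂ ^ 2)) :
    y₁ = y₂ ∧ lam₁ = lam₂ :=
  stmt_16_general N hN a c hc lam₁ lam₂ y₁ y₂ hy₁ hy₂ h₁ h₁' h₂ h₂'
end
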